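/- Let M be an orientable sRC-manifold with VM vertically rigid and dV a rigid volume form. Then on smooth functions the horizontal Laplacian satisfies Δ₀ f = Σ_i (E_i² f + (div E_i)(E_i f)) and Δ₀ = -∇₀*∇₀, where ∇₀ is the horizontal gradient, E_i a horizontal orthonormal frame, and the adjoint is taken in L²(M, dV). -/

import Mathlib

/-- Abstract model of the calculus of smooth vector fields on a manifold:
`F` plays the role of the ring of smooth functions, `V` the space of vector
fields, `D` the derivation action of vector fields on functions, `bracket`
the Lie bracket and `g` a Riemannian metric. -/
structure VFCalc (F : Type*) (V : Type*) [CommRing F] [Algebra ℝ F]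
    [AddCommGroup V] [Module F V] where
  D : V → F → F
  D_add : ∀ X f h, D X (f + h) = D X f + D X h
  D_mul : ∀ X f h, D X (f * h) = f * D X h + h * D X f
  D_addX : ∀ X Y f, D (X + Y) f = D X f + D Y f
  D_smulX : ∀ (f : F) (X : V) (h : F), D (f • X) h = f * D X h
  bracket : V → V → V
  bracket_antisymm : ∀ X Y, bracket X Y = -bracket Y X
  bracket_addl : ∀ X Y Z, bracket (X + Y) Z = bracket X Z + bracket Y Z
  bracket_leibniz : ∀ (X : V) (f : F) (Y : V),
    bracket X (f • Y) = f • bracket X Y + (D X f) • Y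
  jacobi : ∀ X Y Z,
    bracket X (bracket Y Z) + bracket Y (bracket Z X) + bracket Z (bracket X Y) = 0
  D_bracket : ∀ X Y f, D (bracket X Y) f = D X (D Y f) - D Y (D X f)
  g : V → V → F
  g_symm : ∀ X Y, g X Y = g Y X
  g_addl : ∀ X Y Z, g (X + Y) Z = g X Z + g Y Z
  g_smull : ∀ (f : F) (X Y : V), g (f • X) Y = f * g X Y

namespace VFCalc

variable {F : Type*} {V : Type*} [CommRing F] [Algebra ℝ F]
  [AddCommGroup V] [Module F V]

/-- `nab` is an affine connection on vector fields. -/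
structure IsConnection (S : VFCalc F V) (nab : V → V → V) : Prop where
  addX : ∀ X Y Z, nab (X + Y) Z = nab X Z + nab Y Z
  smulX : ∀ (f : F) (X Y : V), nab (f • X) Y = f • nab X Y
  addY : ∀ X Y Z, nab X (Y + Z) = nab X Y + nab X Z
  leibniz : ∀ (X : V) (f : F) (Y : V), nab X (f • Y) = f • nab X Y + (S.D X f) • Y

/-- The torsion `Tor(X,Y) = ∇_X Y - ∇_Y X - [X,Y]` of a connection. -/
def tor (S : VFCalc F V) (nab : V → V → V) (X Y : V) : V :=
  nab X Y - nab Y X - S.bracket X Y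

/-- The curvature operator `R(X,Y)Z = ∇_X ∇_Y Z - ∇_Y ∇_X Z - ∇_{[X,Y]} Z`. -/
def curv (S : VFCalc F V) (nab : V → V → V) (X Y Z : V) : V :=
  nab X (nab Y Z) - nab Y (nab X Z) - nab (S.bracket X Y) Z

/-- The (4,0) curvature tensor `Rm(A,B,C,D) = ⟨R(A,B)C, D⟩`. -/
def Rm (S : VFCalc F V) (nab : V → V → V) (A B C D : V) : F :=
  S.g (curv S nab A B C) D

/-- Metric compatibility of a connection: `∇ g = 0`. -/
def MetricCompat (S : VFCalc F V) (nab : V → V → V) : Prop :=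
  ∀ X Y Z, S.D X (S.g Y Z) = S.g (nab X Y) Z + S.g Y (nab X Z)

/-- The covariant derivative of the torsion: `(∇_X Tor)(Y,Z)`. -/
def nabTor (S : VFCalc F V) (nab : V → V → V) (X Y Z : V) : V :=
  nab X (tor S nab Y Z) - tor S nab (nab X Y) Z - tor S nab Y (nab X Z)

end VFCalc
/-- An sRC decomposition `TM = HM ⊕ VM`, recorded via the two orthogonal
projections `H` (horizontal) and `Vp` (vertical). -/
structure TwoGrading {F : Type*} {V : Type*} [CommRing F] [Algebra ℝ F]
    [AddCommGroup V] [Module F V] (S : VFCalc F V) where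
  H : V → V
  Vp : V → V
  H_add : ∀ X Y, H (X + Y) = H X + H Y
  H_smul : ∀ (f : F) (X : V), H (f • X) = f • H X
  Vp_add : ∀ X Y, Vp (X + Y) = Vp X + Vp Y
  Vp_smul : ∀ (f : F) (X : V), Vp (f • X) = f • Vp X
  sum_eq : ∀ X, H X + Vp X = X
  H_H : ∀ X, H (H X) = H X
  H_Vp : ∀ X, H (Vp X) = 0
  orth : ∀ X Y, S.g (H X) (Vp Y) = 0

namespace VFCalc

variable {F : Type*} {V : Type*} [CommRing F] [Algebra ℝ F]
  [AddCommGroup V] [Module F V]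

/-- `nab` is the canonical (basic) connection of the sRC-manifold: metric
compatible, `HM` and `VM` parallel, `Tor(HM,HM) ⊆ VM`, `Tor(VM,VM) ⊆ HM`,
and the torsion symmetries. -/
structure IsCanonical (S : VFCalc F V) (G : TwoGrading S) (nab : V → V → V) : Prop where
  conn : IsConnection S nab
  metric : MetricCompat S nab
  parH : ∀ X Y, nab X (G.H Y) = G.H (nab X Y)
  torHH : ∀ X Y, G.H (tor S nab (G.H X) (G.H Y)) = 0
  torVV : ∀ X Y, G.Vp (tor S nab (G.Vp X) (G.Vp Y)) = 0
  torSymH : ∀ X Z T, S.g (tor S nab (G.H X) (G.Vp T)) (G.H Z)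
      = S.g (tor S nab (G.H Z) (G.Vp T)) (G.H X)
  torSymV : ∀ X Z T, S.g (tor S nab (G.Vp X) (G.H T)) (G.Vp Z)
      = S.g (tor S nab (G.Vp Z) (G.H T)) (G.Vp X)

/-- Normality of the vertical complement: the tensor
`B(X,Y,T) = T⟨X,Y⟩ + ⟨[X,T],Y⟩ + ⟨[Y,T],X⟩` vanishes for horizontal `X,Y`
and vertical `T`. -/
def NormalV (S : VFCalc F V) (G : TwoGrading S) : Prop :=
  ∀ X Y T, G.H X = X → G.H Y = Y → G.Vp T = T →
    S.D T (S.g X Y) + S.g (S.bracket X T) Y + S.g (S.bracket Y T) X = 0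

/-- `1`-normality (for the basic grading): the tensor `B⁽¹⁾` vanishes,
i.e. `T⟨X,Y⟩ + ⟨[X,T],Y⟩ + ⟨[Y,T],X⟩ = 0` for vertical `X,Y` and horizontal `T`. -/
def NormalH (S : VFCalc F V) (G : TwoGrading S) : Prop :=
  ∀ X Y T, G.Vp X = X → G.Vp Y = Y → G.H T = T →
    S.D T (S.g X Y) + S.g (S.bracket X T) Y + S.g (S.bracket Y T) X = 0

/-- Integrability of the vertical bundle: `[VM,VM] ⊆ VM`. -/
def IntegrableV (S : VFCalc F V) (G : TwoGrading S) : Prop :=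
  ∀ X Y, G.H (S.bracket (G.Vp X) (G.Vp Y)) = 0

/-- A (global) horizontal orthonormal frame. -/
def IsHFrame (S : VFCalc F V) (G : TwoGrading S) {d : ℕ} (E : Fin d → V) : Prop :=
  (∀ i, G.H (E i) = E i) ∧ (∀ i j, S.g (E i) (E j) = if i = j then 1 else 0) ∧
    (∀ X, G.H X = X → X = ∑ i, S.g X (E i) • E i)

/-- A (global) vertical orthonormal frame. -/
def IsVFrame (S : VFCalc F V) (G : TwoGrading S) {m : ℕ} (U : Fin m → V) : Prop :=
  (∀ a, G.Vp (U a) = U a) ∧ (∀ a b, S.g (U a) (U b) = if a = b then 1 else 0) ∧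
    (∀ X, G.Vp X = X → X = ∑ a, S.g X (U a) • U a)

/-- The subRiemannian Ricci curvature `Rc(A,B) = Σ_k Rm(A,E_k,E_k,B)`. -/
def Ric (S : VFCalc F V) (nab : V → V → V) {d : ℕ} (E : Fin d → V) (A B : V) : F :=
  ∑ k, Rm S nab A (E k) (E k) B

end VFCalc

namespace VFCalc

variable {F : Type*} {V : Type*} [CommRing F] [Algebra ℝ F]
  [AddCommGroup V] [Module F V]

/-- The horizontal gradient of a function, with respect to a horizontal
orthonormal frame `E`. -/
def grad0 (S : VFCalc F V) {d : ℕ} (E : Fin d → V) (f : F) : V :=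
  ∑ i, S.D (E i) f • E i

/-- The vertical gradient of a function, with respect to a vertical
orthonormal frame `U`. -/
def grad1 (S : VFCalc F V) {m : ℕ} (U : Fin m → V) (f : F) : V :=
  ∑ a, S.D (U a) f • U a

/-- The horizontal Laplacian `Δ₀ f = Σ_i (∇_{E_i}∇_{E_i} - ∇_{∇_{E_i}E_i}) f`. -/
def lap (S : VFCalc F V) (nab : V → V → V) {d : ℕ} (E : Fin d → V) (f : F) : F :=
  ∑ i, (S.D (E i) (S.D (E i) f) - S.D (nab (E i) (E i)) f)

end VFCalc


namespace VFCalc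

variable {F : Type*} {V : Type*} [CommRing F] [Algebra ℝ F]
  [AddCommGroup V] [Module F V]

lemma D_zeroX' (S : VFCalc F V) (f : F) : S.D 0 f = 0 := by
  have h := S.D_addX 0 0 f
  rw [add_zero] at h
  exact left_eq_add.mp h

lemma D_sumX' (S : VFCalc F V) {ι : Type*} (s : Finset ι) (X : ι → V) (f : F) :
    S.D (∑ i ∈ s, X i) f = ∑ i ∈ s, S.D (X i) f := by
  classical
  induction s using Finset.induction with
  | empty => simpa using S.D_zeroX' f
  | insert _ _ hx ih =>
      rw [Finset.sum_insert hx, Finset.sum_insert hx, S.D_addX, ih]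

lemma D_zero' (S : VFCalc F V) (X : V) : S.D X (0 : F) = 0 := by
  have h := S.D_mul X 0 0
  simpa using h

lemma D_one' (S : VFCalc F V) (X : V) : S.D X (1 : F) = 0 := by
  have h := S.D_mul X 1 1
  simp only [one_mul, mul_one] at h
  exact left_eq_add.mp h


lemma g_zerol' (S : VFCalc F V) (Y : V) : S.g 0 Y = 0 := by
  have h := S.g_addl 0 0 Y
  rw [add_zero] at h
  exact left_eq_add.mp h

lemma g_suml' (S : VFCalc F V) {ι : Type*} (s : Finset ι) (X : ι → V) (Y : V) :
    S.g (∑ i ∈ s, X i) Y = ∑ i ∈ s, S.g (X i) Y := by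
  classical
  induction s using Finset.induction with
  | empty => simpa using S.g_zerol' Y
  | insert _ _ hx ih => rw [Finset.sum_insert hx, Finset.sum_insert hx, S.g_addl, ih]

lemma g_sumr' (S : VFCalc F V) {ι : Type*} (s : Finset ι) (Y : V) (X : ι → V) :
    S.g Y (∑ i ∈ s, X i) = ∑ i ∈ s, S.g Y (X i) := by
  rw [S.g_symm, S.g_suml']
  exact Finset.sum_congr rfl fun i _ => S.g_symm _ _

lemma g_smulr' (S : VFCalc F V) (f : F) (X Y : V) : S.g X (f • Y) = f * S.g X Y := by
  rw [S.g_symm, S.g_smull, S.g_symm]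

end VFCalc

open VFCalc in
/-- **Statement 15.** On an orientable vertically rigid sRC-manifold, with a
rigid volume form (given through its divergence `δ` and the integral `I`),
the horizontal Laplacian satisfies `Δ₀f = Σ_i (E_i² f + (div E_i)(E_i f))` and
`Δ₀ = -∇₀*∇₀` in `L²(M, dV)`. -/
theorem horizontal_laplacian_self_adjoint
    {F : Type*} {V : Type*} [CommRing F] [Algebra ℝ F]
    [AddCommGroup V] [Module F V]
    (S : VFCalc F V) (G : TwoGrading S) (nab : V → V → V)
    (hcan : IsCanonical S G nab)
    {d : ℕ} (E : Fin d → V) (hE : IsHFrame S G E)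
    (δ : V → F)
    (hδadd : ∀ X Y, δ (X + Y) = δ X + δ Y)
    (hδleib : ∀ (f : F) (X : V), δ (f • X) = f * δ X + S.D X f)
    (hδrigid : ∀ X, G.H X = X → δ X = ∑ i, S.g (nab (E i) X) (E i))
    (I : F →ₗ[ℝ] ℝ) (hIdiv : ∀ X, I (δ X) = 0) :
    (∀ f : F, lap S nab E f
        = ∑ i, (S.D (E i) (S.D (E i) f) + δ (E i) * S.D (E i) f)) ∧
    (∀ f h : F, I (h * lap S nab E f)
        = -I (S.g (grad0 S E f) (grad0 S E h))) := by
  classical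
  obtain ⟨hEh, hEg, hEexp⟩ := hE
  -- derivatives of constants
  have hDg : ∀ (X : V) (i j : Fin d), S.D X (S.g (E i) (E j)) = 0 := by
    intro X i j
    rw [hEg]
    by_cases hij : i = j
    · simp only [hij, if_pos rfl]; exact S.D_one' X
    · simp only [if_neg hij]; exact S.D_zero' X
  -- key coefficient identity
  have hcoef : ∀ i j : Fin d,
      S.g (nab (E j) (E j)) (E i) = - S.g (nab (E j) (E i)) (E j) := by
    intro i j
    have hm := hcan.metric (E j) (E j) (E i)
    rw [hDg] at hm
    have h2 := eq_neg_of_add_eq_zero_left hm.symm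
    rw [h2, S.g_symm (E j)]
  -- horizontality of nab E_j E_j
  have hhor : ∀ j, G.H (nab (E j) (E j)) = nab (E j) (E j) := by
    intro j
    have h1 := hcan.parH (E j) (E j)
    rw [hEh j] at h1
    exact h1.symm
  have hexp : ∀ j, nab (E j) (E j) = ∑ i, S.g (nab (E j) (E j)) (E i) • E i :=
    fun j => hEexp _ (hhor j)
  -- the key divergence identity
  have key : ∀ f : F,
      ∑ j, S.D (nab (E j) (E j)) f = -∑ i, δ (E i) * S.D (E i) f := by
    intro f
    have step1 : ∀ j, S.D (nab (E j) (E j)) f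
        = ∑ i, -(S.g (nab (E j) (E i)) (E j) * S.D (E i) f) := by
      intro j
      conv_lhs => rw [hexp j]
      rw [S.D_sumX']
      refine Finset.sum_congr rfl fun i _ => ?_
      rw [S.D_smulX, hcoef i j, neg_mul]
    calc ∑ j, S.D (nab (E j) (E j)) f
        = ∑ j, ∑ i, -(S.g (nab (E j) (E i)) (E j) * S.D (E i) f) :=
          Finset.sum_congr rfl fun j _ => step1 j
      _ = ∑ i, -(δ (E i) * S.D (E i) f) := by
          rw [Finset.sum_comm]
          refine Finset.sum_congr rfl fun y _ => ?_
          rw [Finset.sum_neg_distrib, hδrigid (E y) (hEh y), Finset.sum_mul]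
      _ = -∑ i, δ (E i) * S.D (E i) f := Finset.sum_neg_distrib _
  have part1 : ∀ f : F, lap S nab E f
      = ∑ i, (S.D (E i) (S.D (E i) f) + δ (E i) * S.D (E i) f) := by
    intro f
    unfold lap
    rw [Finset.sum_sub_distrib, key f, sub_neg_eq_add, ← Finset.sum_add_distrib]
  refine ⟨part1, fun f h => ?_⟩
  -- δ of finite sums
  have hδ0 : δ 0 = 0 := by
    have h0 := hδadd 0 0
    rw [add_zero] at h0
    exact left_eq_add.mp h0
  have hδsum : ∀ (X : Fin d → V), δ (∑ i, X i) = ∑ i, δ (X i) := by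
    intro X
    induction (Finset.univ : Finset (Fin d)) using Finset.cons_induction with
    | empty => simpa using hδ0
    | cons a s ha ih => rw [Finset.sum_cons, Finset.sum_cons, hδadd, ih]
  -- D (grad f) h = ⟨grad f, grad h⟩
  have hg : S.D (grad0 S E f) h = S.g (grad0 S E f) (grad0 S E h) := by
    unfold grad0
    rw [S.D_sumX', S.g_suml']
    refine Finset.sum_congr rfl fun i _ => ?_
    rw [S.D_smulX, S.g_smull, S.g_sumr']
    congr 1
    have hterm : ∀ j, S.g (E i) (S.D (E j) h • E j)
        = if i = j then S.D (E j) h else 0 := by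
      intro j
      rw [S.g_smulr', hEg i j]
      split <;> simp
    rw [Finset.sum_congr rfl fun j _ => hterm j, Finset.sum_ite_eq]
    simp
  -- δ (grad f) = lap f
  have hδgrad : δ (grad0 S E f) = lap S nab E f := by
    rw [part1 f]
    unfold grad0
    rw [hδsum]
    refine Finset.sum_congr rfl fun i _ => ?_
    rw [hδleib]
    ring
  have h0 := hIdiv (h • grad0 S E f)
  rw [hδleib, hδgrad, hg, map_add] at h0
  linarith
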